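/- arXiv:2511.19779 — 4 statements merged into one kernel-verified Lean document; each statement's English description precedes it below -/
import Mathlib

section
/- Let I = [0,T], M ∈ L¹([0,T], ℝ₊), and v : [0,T] × ℝ^d → ℝ^d a Carathéodory vector field with |v(t,x)| ≤ M(t)(1+|x|) and x ↦ v(t,x) M(t)-Lipschitz for a.e. t. Then for every τ ∈ [0,T] and every x ∈ ℝ^d, the flow Φ solving Φ_{(τ,t)}(x) = x + ∫_τ^t v(s, Φ_{(τ,s)}(x)) ds satisfies the second-order Taylor-type estimate |Φ_{(τ,τ+h)}(x) − x − ∫_τ^{τ+h} v(s,x) ds| ≤ (1 + C_T)(1 + |x|) (∫_τ^{τ+h} M(s) ds)², where C_T depends only on ∫_0^T M(s) ds. -/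
open MeasureTheory intervalIntegral

lemma my_gronwall {a b : ℝ} (hab : a ≤ b) {M u : ℝ → ℝ}
    (hM0 : ∀ t, 0 ≤ M t)
    (hMI : IntervalIntegrable M volume a b)
    (hu : ContinuousOn u (Set.Icc a b))
    (hu0 : ∀ t, 0 ≤ u t)
    (key : ∀ p ∈ Set.Icc a b, ∀ q ∈ Set.Icc a b, p ≤ q →
      u q ≤ u p + ∫ s in p..q, M s * u s ∧ u p ≤ u q + ∫ s in p..q, M s * u s) :
    ∀ k : ℕ, ∀ p ∈ Set.Icc a b, ∀ q ∈ Set.Icc a b, p ≤ q →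
      (∫ s in p..q, M s) ≤ k / 2 →
      u q ≤ 2 ^ (k + 1) * u p ∧ u p ≤ 2 ^ (k + 1) * u q := by
  have hmem : ∀ p ∈ Set.Icc a b, p ∈ Set.uIcc a b := by
    intro p hp; rw [Set.uIcc_of_le hab]; exact hp
  have hMI' : ∀ p ∈ Set.Icc a b, ∀ q ∈ Set.Icc a b, IntervalIntegrable M volume p q :=
    fun p hp q hq => hMI.mono_set (Set.uIcc_subset_uIcc (hmem p hp) (hmem q hq))
  have hMuI : ∀ p ∈ Set.Icc a b, ∀ q ∈ Set.Icc a b,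
      IntervalIntegrable (fun s => M s * u s) volume p q := by
    intro p hp q hq
    exact (hMI' p hp q hq).mul_continuousOn
      (hu.mono ((Set.uIcc_subset_uIcc (hmem p hp) (hmem q hq)).trans
        (Set.uIcc_of_le hab ▸ le_refl _)))
  -- doubling lemma
  have doubling : ∀ p ∈ Set.Icc a b, ∀ q ∈ Set.Icc a b, p ≤ q →
      (∫ s in p..q, M s) ≤ 1 / 2 →
      (∀ r ∈ Set.Icc p q, u r ≤ 2 * u p) ∧ (∀ r ∈ Set.Icc p q, u r ≤ 2 * u q) := by
    intro p hp q hq hpq hsmall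
    have hsub : Set.Icc p q ⊆ Set.Icc a b := Set.Icc_subset_Icc hp.1 hq.2
    obtain ⟨c, hc, hcmax⟩ := isCompact_Icc.exists_isMaxOn (Set.nonempty_Icc.2 hpq)
      (hu.mono hsub)
    have hcab : c ∈ Set.Icc a b := hsub hc
    have hMint_le : ∀ r ∈ Set.Icc a b, ∀ s ∈ Set.Icc a b, p ≤ r → r ≤ s → s ≤ q →
        (∫ θ in r..s, M θ) * u c ≤ (1 / 2) * u c := by
      intro r hr s hs hpr hrs hsq
      refine mul_le_mul_of_nonneg_right ?_ (hu0 c)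
      calc (∫ θ in r..s, M θ) ≤ ∫ θ in p..q, M θ :=
            integral_mono_interval hpr hrs hsq
              (Filter.Eventually.of_forall fun θ => hM0 θ) (hMI' p hp q hq)
        _ ≤ 1 / 2 := hsmall
    have huc_int : ∀ r ∈ Set.Icc a b, ∀ s ∈ Set.Icc a b, r ≤ s → Set.Icc r s ⊆ Set.Icc p q →
        (∫ θ in r..s, M θ * u θ) ≤ (∫ θ in r..s, M θ) * u c := by
      intro r hr s hs hrs hss
      rw [← intervalIntegral.integral_mul_const]
      refine intervalIntegral.integral_mono_on hrs (hMuI r hr s hs) ((hMI' r hr s hs).mul_const _) ?_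
      intro θ hθ
      exact mul_le_mul_of_nonneg_left (hcmax (hss hθ)) (hM0 θ)
    constructor
    · intro r hr
      have hrab : r ∈ Set.Icc a b := hsub hr
      have h1 : u c ≤ u p + ∫ θ in p..c, M θ * u θ := (key p hp c hcab hc.1).1
      have h2 : (∫ θ in p..c, M θ * u θ) ≤ (∫ θ in p..c, M θ) * u c :=
        huc_int p hp c hcab hc.1 (Set.Icc_subset_Icc le_rfl hc.2)
      have h3 := hMint_le p hp c hcab le_rfl hc.1 hc.2
      have h4 : u r ≤ u c := hcmax hr
      linarith
    · intro r hr
      have h1 : u c ≤ u q + ∫ θ in c..q, M θ * u θ := (key c hcab q hq hc.2).2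
      have h2 : (∫ θ in c..q, M θ * u θ) ≤ (∫ θ in c..q, M θ) * u c :=
        huc_int c hcab q hq hc.2 (Set.Icc_subset_Icc hc.1 le_rfl)
      have h3 := hMint_le c hcab q hq hc.1 hc.2 le_rfl
      have h4 : u r ≤ u c := hcmax hr
      linarith
  intro k
  induction k with
  | zero =>
    intro p hp q hq hpq hint
    have h := doubling p hp q hq hpq (by norm_num at hint ⊢; linarith)
    exact ⟨by simpa using h.1 q (Set.right_mem_Icc.2 hpq),
      by simpa using h.2 p (Set.left_mem_Icc.2 hpq)⟩
  | succ k ih =>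
    intro p hp q hq hpq hint
    rcases le_or_gt (∫ s in p..q, M s) ((k : ℝ) / 2) with hle | hgt
    · obtain ⟨h1, h2⟩ := ih p hp q hq hpq hle
      have hpow : (2 : ℝ) ^ (k + 1) ≤ 2 ^ (k + 1 + 1) := by
        apply pow_le_pow_right₀ (by norm_num) (Nat.le_succ _)
      exact ⟨h1.trans (mul_le_mul_of_nonneg_right hpow (hu0 p)),
        h2.trans (mul_le_mul_of_nonneg_right hpow (hu0 q))⟩
    · -- find intermediate point m with ∫ p..m M = k/2
      have hcontg : ContinuousOn (fun r => ∫ s in p..r, M s) (Set.Icc p q) := by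
        have := continuousOn_primitive_interval' (hMI' p hp q hq)
          (Set.left_mem_uIcc (a := p) (b := q))
        rwa [Set.uIcc_of_le hpq] at this
      have hiv := intermediate_value_Icc hpq hcontg
      have hmemv : (k : ℝ) / 2 ∈ Set.Icc ((fun r => ∫ s in p..r, M s) p)
          ((fun r => ∫ s in p..r, M s) q) := by
        simp only [intervalIntegral.integral_same]
        exact ⟨by positivity, hgt.le⟩
      obtain ⟨m, hm, hgm⟩ := hiv hmemv
      simp only at hgm
      have hmab : m ∈ Set.Icc a b := (Set.Icc_subset_Icc hp.1 hq.2) hm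
      have hsplit : (∫ s in p..m, M s) + (∫ s in m..q, M s) = ∫ s in p..q, M s :=
        integral_add_adjacent_intervals (hMI' p hp m hmab) (hMI' m hmab q hq)
      have hmq : (∫ s in m..q, M s) ≤ 1 / 2 := by
        push_cast at hint
        linarith
      obtain ⟨ih1, ih2⟩ := ih p hp m hmab hm.1 (le_of_eq hgm)
      obtain ⟨d1, d2⟩ := doubling m hmab q hq hm.2 hmq
      have e1 : u q ≤ 2 * u m := d1 q (Set.right_mem_Icc.2 hm.2)
      have e2 : u m ≤ 2 * u q := d2 m (Set.left_mem_Icc.2 hm.2)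
      constructor
      · calc u q ≤ 2 * u m := e1
          _ ≤ 2 * (2 ^ (k + 1) * u p) := by linarith
          _ = 2 ^ (k + 1 + 1) * u p := by ring
      · calc u p ≤ 2 ^ (k + 1) * u m := ih2
          _ ≤ 2 ^ (k + 1) * (2 * u q) := by
              exact mul_le_mul_of_nonneg_left e2 (by positivity)
          _ = 2 ^ (k + 1 + 1) * u q := by ring

/-- Second-order Taylor-type estimate for the characteristic flow of a Carathéodory vector
field `v` on `[0,T] × ℝ^d` with `|v(t,x)| ≤ M(t)(1+|x|)` and `v(t,·)` `M(t)`-Lipschitz: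
`|Φ_{(τ,τ+h)}(x) − x − ∫_τ^{τ+h} v(s,x) ds| ≤ (1 + C_T)(1 + |x|)(∫_τ^{τ+h} M)²`,
where `C_T` depends only on `∫_0^T M`. -/
theorem stmt5 {d : ℕ} (T : ℝ) (hT : 0 ≤ T)
    (M : ℝ → ℝ) (hM0 : ∀ t, 0 ≤ M t) (hMint : IntegrableOn M (Set.Icc 0 T))
    (v : ℝ → EuclideanSpace ℝ (Fin d) → EuclideanSpace ℝ (Fin d))
    (hmeas : ∀ x, Measurable fun t => v t x)
    (hgrowth : ∀ᵐ t ∂(volume.restrict (Set.Icc 0 T)),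
      ∀ x, ‖v t x‖ ≤ M t * (1 + ‖x‖))
    (hlip : ∀ᵐ t ∂(volume.restrict (Set.Icc 0 T)),
      LipschitzWith (Real.toNNReal (M t)) (v t))
    (Φ : ℝ → ℝ → EuclideanSpace ℝ (Fin d) → EuclideanSpace ℝ (Fin d))
    (hΦint : ∀ τ ∈ Set.Icc 0 T, ∀ t ∈ Set.Icc 0 T, ∀ x,
      IntervalIntegrable (fun s => v s (Φ τ s x)) volume τ t)
    (hΦ : ∀ τ ∈ Set.Icc 0 T, ∀ t ∈ Set.Icc 0 T, ∀ x,
      Φ τ t x = x + ∫ s in τ..t, v s (Φ τ s x)) :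
    ∃ C > 0,
      (∀ τ ∈ Set.Icc 0 T, ∀ t ∈ Set.Icc 0 T, ∀ x, ‖Φ τ t x‖ ≤ C * (1 + ‖x‖)) ∧
      ∀ τ h (x : EuclideanSpace ℝ (Fin d)), 0 ≤ τ → 0 ≤ h → τ + h ≤ T →
        ‖Φ τ (τ + h) x - x - ∫ s in τ..(τ + h), v s x‖ ≤
          (1 + C) * (1 + ‖x‖) * (∫ s in τ..(τ + h), M s) ^ 2 := by
  set K := ∫ s in (0 : ℝ)..T, M s with hK
  set k := ⌈2 * K⌉₊ with hk
  set C : ℝ := 2 ^ (k + 1) with hC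
  have hCpos : (0 : ℝ) < C := by positivity
  have hMI : IntervalIntegrable M volume 0 T :=
    (intervalIntegrable_iff_integrableOn_Icc_of_le hT).2 hMint
  have hmem : ∀ p ∈ Set.Icc (0 : ℝ) T, p ∈ Set.uIcc (0 : ℝ) T := by
    intro p hp; rw [Set.uIcc_of_le hT]; exact hp
  have hMI' : ∀ p ∈ Set.Icc (0 : ℝ) T, ∀ q ∈ Set.Icc (0 : ℝ) T,
      IntervalIntegrable M volume p q :=
    fun p hp q hq => hMI.mono_set (Set.uIcc_subset_uIcc (hmem p hp) (hmem q hq))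
  have hMle : ∀ p ∈ Set.Icc (0 : ℝ) T, ∀ q ∈ Set.Icc (0 : ℝ) T, p ≤ q →
      (∫ s in p..q, M s) ≤ K :=
    fun p hp q hq hpq => integral_mono_interval hp.1 hpq hq.2
      (Filter.Eventually.of_forall fun θ => hM0 θ) hMI
  have hKk : K ≤ (k : ℝ) / 2 := by
    have := Nat.le_ceil (2 * K)
    rw [← hk] at this
    linarith
  -- a.e. bounds restricted to subintervals
  have hae : ∀ p ∈ Set.Icc (0 : ℝ) T, ∀ q ∈ Set.Icc (0 : ℝ) T,
      ∀ᵐ t ∂(volume.restrict (Set.uIoc p q)),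
        (∀ y, ‖v t y‖ ≤ M t * (1 + ‖y‖)) ∧ LipschitzWith (Real.toNNReal (M t)) (v t) := by
    intro p hp q hq
    have hsub : Set.uIoc p q ⊆ Set.Icc 0 T := by
      refine (Set.uIoc_subset_uIcc).trans ?_
      exact (Set.uIcc_subset_uIcc (hmem p hp) (hmem q hq)).trans (Set.uIcc_of_le hT).subset
    exact ae_restrict_of_ae_restrict_of_subset hsub (hgrowth.and hlip)
  -- Main sup bound, per τ and x
  have hbd : ∀ τ ∈ Set.Icc (0 : ℝ) T, ∀ t ∈ Set.Icc (0 : ℝ) T, ∀ x,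
      ‖Φ τ t x‖ ≤ C * (1 + ‖x‖) := by
    intro τ hτ t ht x
    set g : ℝ → EuclideanSpace ℝ (Fin d) := fun s => v s (Φ τ s x) with hg
    have hII : ∀ p ∈ Set.Icc (0 : ℝ) T, ∀ q ∈ Set.Icc (0 : ℝ) T,
        IntervalIntegrable g volume p q :=
      fun p hp q hq => (hΦint τ hτ p hp x).symm.trans (hΦint τ hτ q hq x)
    have hcont : ContinuousOn (fun s => Φ τ s x) (Set.Icc 0 T) := by
      have h1 : ContinuousOn (fun s => x + ∫ θ in τ..s, g θ) (Set.Icc 0 T) := by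
        have := continuousOn_primitive_interval'
          (hII 0 (Set.left_mem_Icc.2 hT) T (Set.right_mem_Icc.2 hT)) (hmem τ hτ)
        rw [Set.uIcc_of_le hT] at this
        exact continuousOn_const.add this
      exact h1.congr fun s hs => hΦ τ hτ s hs x
    set u : ℝ → ℝ := fun s => 1 + ‖Φ τ s x‖ with hu
    have hu0 : ∀ s, 0 ≤ u s := fun s => by positivity
    have hucont : ContinuousOn u (Set.Icc 0 T) := continuousOn_const.add hcont.norm
    have key : ∀ p ∈ Set.Icc (0 : ℝ) T, ∀ q ∈ Set.Icc (0 : ℝ) T, p ≤ q →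
        u q ≤ u p + ∫ s in p..q, M s * u s ∧ u p ≤ u q + ∫ s in p..q, M s * u s := by
      intro p hp q hq hpq
      have hdiff : Φ τ q x - Φ τ p x = ∫ s in p..q, g s := by
        rw [hΦ τ hτ q hq x, hΦ τ hτ p hp x, add_sub_add_left_eq_sub]
        exact integral_interval_sub_left (hΦint τ hτ q hq x) (hΦint τ hτ p hp x)
      have hMuI : IntervalIntegrable (fun s => M s * u s) volume p q :=
        (hMI' p hp q hq).mul_continuousOn
          (hucont.mono ((Set.uIcc_subset_uIcc (hmem p hp) (hmem q hq)).trans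
            (Set.uIcc_of_le hT).subset))
      have hnn : 0 ≤ ∫ s in p..q, M s * u s :=
        intervalIntegral.integral_nonneg hpq fun s _ => mul_nonneg (hM0 s) (hu0 s)
      have hnorm : ‖∫ s in p..q, g s‖ ≤ ∫ s in p..q, M s * u s := by
        have := intervalIntegral.norm_integral_le_abs_of_norm_le
          (f := g) (g := fun s => M s * u s) (μ := volume) (a := p) (b := q)
          ((hae p hp q hq).mono fun s hs => (hs.1 (Φ τ s x))) hMuI
        rwa [abs_of_nonneg hnn] at this
      have habs : |‖Φ τ q x‖ - ‖Φ τ p x‖| ≤ ‖Φ τ q x - Φ τ p x‖ := abs_norm_sub_norm_le _ _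
      rw [hdiff] at habs
      rw [abs_le] at habs
      constructor <;> simp only [hu] <;> linarith [habs.1, habs.2, hnorm]
    have hgron := my_gronwall hT hM0 hMI hucont hu0 key k
    have hΦττ : Φ τ τ x = x := by
      rw [hΦ τ hτ τ hτ x, intervalIntegral.integral_same, add_zero]
    have huτ : u τ = 1 + ‖x‖ := by rw [hu]; simp [hΦττ]
    have hfin : u t ≤ C * (1 + ‖x‖) := by
      rcases le_total τ t with hτt | htτ
      · have := (hgron τ hτ t ht hτt ((hMle τ hτ t ht hτt).trans hKk)).1
        rwa [huτ, ← hC] at this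
      · have := (hgron t ht τ hτ htτ ((hMle t ht τ hτ htτ).trans hKk)).2
        rwa [huτ, ← hC] at this
    have : ‖Φ τ t x‖ ≤ u t := by simp only [hu]; linarith [norm_nonneg (Φ τ t x)]
    linarith
  refine ⟨C, hCpos, hbd, ?_⟩
  intro τ h x hτ0 hh0 hτhT
  have hτT : τ ∈ Set.Icc (0 : ℝ) T := ⟨hτ0, by linarith⟩
  have hτhT' : τ + h ∈ Set.Icc (0 : ℝ) T := ⟨by linarith, hτhT⟩
  have hτh : τ ≤ τ + h := by linarith
  set D := ∫ s in τ..(τ + h), M s with hD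
  have hD0 : 0 ≤ D :=
    intervalIntegral.integral_nonneg hτh fun s _ => hM0 s
  set c : ℝ := (1 + C) * (1 + ‖x‖) with hc
  have hc0 : 0 ≤ c := by positivity
  have hMii : IntervalIntegrable M volume τ (τ + h) := hMI' τ hτT (τ + h) hτhT'
  -- integrability of s ↦ v s x
  have hvx_int : IntervalIntegrable (fun s => v s x) volume τ (τ + h) := by
    rw [intervalIntegrable_iff_integrableOn_Ioc_of_le hτh]
    have hsub : Set.Ioc τ (τ + h) ⊆ Set.Icc 0 T :=
      fun s hs => ⟨by linarith [hs.1], by linarith [hs.2]⟩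
    refine Integrable.mono' ((hMint.mono_set hsub).mul_const (1 + ‖x‖))
      ((hmeas x).aestronglyMeasurable) ?_
    exact ((ae_restrict_of_ae_restrict_of_subset hsub hgrowth).mono fun s hs => hs x)
  -- bound on ‖Φ τ s x - x‖ for s in the interval
  have hflow : ∀ s ∈ Set.Icc τ (τ + h), ‖Φ τ s x - x‖ ≤ c * D := by
    intro s hs
    have hsT : s ∈ Set.Icc (0 : ℝ) T := ⟨by linarith [hs.1], by linarith [hs.2]⟩
    have heq : Φ τ s x - x = ∫ θ in τ..s, v θ (Φ τ θ x) := by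
      rw [hΦ τ hτT s hsT x]; abel
    have hMc : IntervalIntegrable (fun θ => M θ * c) volume τ s :=
      (hMI' τ hτT s hsT).mul_const _
    have hbd2 : ‖∫ θ in τ..s, v θ (Φ τ θ x)‖ ≤ |∫ θ in τ..s, M θ * c| := by
      refine intervalIntegral.norm_integral_le_abs_of_norm_le ?_ hMc
      filter_upwards [hae τ hτT s hsT, ae_restrict_mem measurableSet_uIoc] with θ hθ hθmem
      calc ‖v θ (Φ τ θ x)‖ ≤ M θ * (1 + ‖Φ τ θ x‖) := hθ.1 _
        _ ≤ M θ * c := by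
            refine mul_le_mul_of_nonneg_left ?_ (hM0 θ)
            have := hbd τ hτT θ ?hθT x
            case hθT =>
              rcases Set.mem_uIoc.1 hθmem with h1 | h1
              · exact ⟨by linarith [h1.1], by linarith [h1.2, hsT.2]⟩
              · exact ⟨by linarith [h1.1, hsT.1], by linarith [h1.2]⟩
            rw [hc]
            nlinarith [norm_nonneg x, hCpos.le]
    have hint_c : (∫ θ in τ..s, M θ * c) = (∫ θ in τ..s, M θ) * c :=
      intervalIntegral.integral_mul_const _ _
    have hMs_le : (∫ θ in τ..s, M θ) ≤ D :=
      integral_mono_interval le_rfl hs.1 hs.2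
        (Filter.Eventually.of_forall fun θ => hM0 θ) hMii
    have hMs_nn : 0 ≤ ∫ θ in τ..s, M θ :=
      intervalIntegral.integral_nonneg hs.1 fun θ _ => hM0 θ
    rw [heq]
    calc ‖∫ θ in τ..s, v θ (Φ τ θ x)‖ ≤ |∫ θ in τ..s, M θ * c| := hbd2
      _ = (∫ θ in τ..s, M θ) * c := by rw [hint_c, abs_of_nonneg (mul_nonneg hMs_nn hc0)]
      _ ≤ D * c := mul_le_mul_of_nonneg_right hMs_le hc0
      _ = c * D := mul_comm _ _
  -- main estimate
  have heq2 : Φ τ (τ + h) x - x - (∫ s in τ..(τ + h), v s x)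
      = ∫ s in τ..(τ + h), (v s (Φ τ s x) - v s x) := by
    rw [hΦ τ hτT (τ + h) hτhT' x,
      intervalIntegral.integral_sub (hΦint τ hτT (τ + h) hτhT' x) hvx_int]
    abel
  have hMcD : IntervalIntegrable (fun s => M s * (c * D)) volume τ (τ + h) :=
    hMii.mul_const _
  have hfinal : ‖∫ s in τ..(τ + h), (v s (Φ τ s x) - v s x)‖
      ≤ |∫ s in τ..(τ + h), M s * (c * D)| := by
    refine intervalIntegral.norm_integral_le_abs_of_norm_le ?_ hMcD
    filter_upwards [hae τ hτT (τ + h) hτhT', ae_restrict_mem measurableSet_uIoc] with s hs hsmem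
    have hsIcc : s ∈ Set.Icc τ (τ + h) := by
      rw [Set.uIoc_of_le hτh] at hsmem
      exact Set.Ioc_subset_Icc_self hsmem
    calc ‖v s (Φ τ s x) - v s x‖ ≤ (Real.toNNReal (M s)) * ‖Φ τ s x - x‖ := by
          have := hs.2.dist_le_mul (Φ τ s x) x
          rwa [dist_eq_norm] at this
      _ = M s * ‖Φ τ s x - x‖ := by rw [Real.coe_toNNReal _ (hM0 s)]
      _ ≤ M s * (c * D) := mul_le_mul_of_nonneg_left (hflow s hsIcc) (hM0 s)
  rw [heq2]
  calc ‖∫ s in τ..(τ + h), (v s (Φ τ s x) - v s x)‖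
      ≤ |∫ s in τ..(τ + h), M s * (c * D)| := hfinal
    _ = D * (c * D) := by
        rw [intervalIntegral.integral_mul_const, ← hD,
          abs_of_nonneg (mul_nonneg hD0 (mul_nonneg hc0 hD0))]
    _ = (1 + C) * (1 + ‖x‖) * D ^ 2 := by rw [hc]; ring
end

section
/- Let M ∈ L¹([0,T], ℝ₊) and v a Carathéodory vector field with |v(t,x)| ≤ M(t)(1+|x|) and Lip(v(t,·)) ≤ M(t) for a.e. t. Then for each τ ∈ [0,T] and each Borel probability measure μ_τ on ℝ^d with finite first moment, the solution μ(t) = (Φ_{(τ,t)})♯μ_τ of the continuity equation ∂_t μ + div(v μ) = 0 with μ(τ) = μ_τ satisfies W₁( μ(τ+h), (Id + ∫_τ^{τ+h} v(s,·) ds)♯ μ_τ ) ≤ c (∫_τ^{τ+h} M(s) ds)², where c > 0 depends only on the first moment of μ_τ and on ∫_0^T M(s) ds. -/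
open MeasureTheory intervalIntegral

/-- The 1-Wasserstein distance: the infimum over couplings `γ` of `μ` and `ν` of
`∫ dist(x, y) dγ(x, y)`. -/
noncomputable def W1 {E : Type*} [MeasurableSpace E] [MetricSpace E]
    (μ ν : Measure E) : ℝ :=
  sInf { r | ∃ γ : Measure (E × E), IsProbabilityMeasure γ ∧
    γ.map Prod.fst = μ ∧ γ.map Prod.snd = ν ∧ r = ∫ p, dist p.1 p.2 ∂γ }

lemma W1_le_integral {E : Type*} [MeasurableSpace E] [MetricSpace E]
    [OpensMeasurableSpace E] [SecondCountableTopology E]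
    (μ : Measure E) [IsProbabilityMeasure μ] (f g : E → E)
    (hf : Measurable f) (hg : Measurable g) :
    W1 (μ.map f) (μ.map g) ≤ ∫ x, dist (f x) (g x) ∂μ := by
  have hm : Measurable (fun x => (f x, g x)) := hf.prodMk hg
  have hγ : IsProbabilityMeasure (μ.map (fun x => (f x, g x))) :=
    Measure.isProbabilityMeasure_map hm.aemeasurable
  have hdist : Continuous (fun p : E × E => dist p.1 p.2) := continuous_dist
  have hint : ∫ p, dist p.1 p.2 ∂(μ.map (fun x => (f x, g x)))
      = ∫ x, dist (f x) (g x) ∂μ := by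
    rw [integral_map hm.aemeasurable hdist.aestronglyMeasurable]
  refine csInf_le ⟨0, ?_⟩ ?_
  · rintro r ⟨γ, hγ', -, -, rfl⟩
    exact integral_nonneg fun p => dist_nonneg
  · refine ⟨μ.map (fun x => (f x, g x)), hγ, ?_, ?_, hint.symm⟩
    · rw [Measure.map_map measurable_fst hm]; rfl
    · rw [Measure.map_map measurable_snd hm]; rfl

/-- For a Carathéodory field `v` with `|v(t,x)| ≤ M(t)(1+|x|)` and `Lip(v(t,·)) ≤ M(t)`,
the solution `μ(t) = (Φ_{(τ,t)})♯μ_τ` of the continuity equation satisfies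
`W₁(μ(τ+h), (Id + ∫_τ^{τ+h} v(s,·) ds)♯μ_τ) ≤ c (∫_τ^{τ+h} M)²`,
where `c > 0` depends only on the first moment of `μ_τ` and on `∫_0^T M`. -/
theorem stmt6 {d : ℕ} (T : ℝ) (hT : 0 ≤ T)
    (M : ℝ → ℝ) (hM0 : ∀ t, 0 ≤ M t) (hMint : IntegrableOn M (Set.Icc 0 T))
    (v : ℝ → EuclideanSpace ℝ (Fin d) → EuclideanSpace ℝ (Fin d))
    (hmeas : ∀ x, Measurable fun t => v t x)
    (hgrowth : ∀ᵐ t ∂(volume.restrict (Set.Icc 0 T)),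
      ∀ x, ‖v t x‖ ≤ M t * (1 + ‖x‖))
    (hlip : ∀ᵐ t ∂(volume.restrict (Set.Icc 0 T)),
      LipschitzWith (Real.toNNReal (M t)) (v t))
    (Φ : ℝ → ℝ → EuclideanSpace ℝ (Fin d) → EuclideanSpace ℝ (Fin d))
    (hΦmeas : ∀ τ t, Measurable (Φ τ t))
    (hΦint : ∀ τ ∈ Set.Icc 0 T, ∀ t ∈ Set.Icc 0 T, ∀ x,
      IntervalIntegrable (fun s => v s (Φ τ s x)) volume τ t)
    (hΦ : ∀ τ ∈ Set.Icc 0 T, ∀ t ∈ Set.Icc 0 T, ∀ x,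
      Φ τ t x = x + ∫ s in τ..t, v s (Φ τ s x))
    (μτ : Measure (EuclideanSpace ℝ (Fin d))) [IsProbabilityMeasure μτ]
    (hmom : Integrable (fun x => ‖x‖) μτ) :
    ∃ c > 0, ∀ τ h, 0 ≤ τ → 0 ≤ h → τ + h ≤ T →
      W1 (μτ.map (Φ τ (τ + h)))
          (μτ.map (fun x => x + ∫ s in τ..(τ + h), v s x)) ≤
        c * (∫ s in τ..(τ + h), M s) ^ 2 := by
  classical
  have hMI : ∀ a b : ℝ, 0 ≤ a → a ≤ b → b ≤ T → IntervalIntegrable M volume a b := by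
    intro a b ha hab hbT
    rw [intervalIntegrable_iff]
    refine hMint.mono_set ?_
    rw [Set.uIoc_of_le hab]
    exact fun t ht => ⟨le_of_lt (lt_of_le_of_lt ha ht.1), ht.2.trans hbT⟩
  have hMnn : ∀ a b : ℝ, a ≤ b → 0 ≤ ∫ s in a..b, M s := fun a b hab =>
    intervalIntegral.integral_nonneg hab (fun t _ => hM0 t)
  set I : ℝ := ∫ s in (0:ℝ)..T, M s with hIdef
  have hInn : 0 ≤ I := hMnn 0 T hT
  set N : ℕ := ⌈2 * I⌉₊ with hNdef
  have hIN : I ≤ ((N : ℝ) + 1) / 2 := by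
    have h1 := Nat.le_ceil (2 * I)
    rw [← hNdef] at h1
    linarith
  set K : ℝ := 2 ^ (N + 1) with hKdef
  have hK1 : (1:ℝ) ≤ K := one_le_pow₀ (by norm_num)
  have hK0 : (0:ℝ) < K := lt_of_lt_of_le one_pos hK1
  set m : ℝ := ∫ x, ‖x‖ ∂μτ with hmdef
  have hmnn : 0 ≤ m := integral_nonneg fun x => norm_nonneg x
  refine ⟨K * (1 + m), by positivity, ?_⟩
  intro τ h hτ hh hτh
  set b : ℝ := τ + h with hbdef
  have hτb : τ ≤ b := by rw [hbdef]; linarith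
  have hbT : b ≤ T := hτh
  have hτT : τ ≤ T := le_trans hτb hbT
  have hτmem : τ ∈ Set.Icc (0:ℝ) T := ⟨hτ, hτT⟩
  have hbmem : b ∈ Set.Icc (0:ℝ) T := ⟨le_trans hτ hτb, hbT⟩
  set J : ℝ := ∫ s in τ..b, M s with hJdef
  have hJnn : 0 ≤ J := hMnn τ b hτb
  have hMsub : ∀ a' b', τ ≤ a' → a' ≤ b' → b' ≤ T → (∫ s in a'..b', M s) ≤ I := by
    intro a' b' h1 h2 h3
    have ha' : 0 ≤ a' := le_trans hτ h1
    have e1 : (∫ s in (0:ℝ)..a', M s) + ∫ s in a'..b', M s = ∫ s in (0:ℝ)..b', M s :=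
      integral_add_adjacent_intervals (hMI 0 a' le_rfl ha' (le_trans h2 h3))
        (hMI a' b' ha' h2 h3)
    have e2 : (∫ s in (0:ℝ)..b', M s) + ∫ s in b'..T, M s = ∫ s in (0:ℝ)..T, M s :=
      integral_add_adjacent_intervals (hMI 0 b' le_rfl (le_trans ha' h2) h3)
        (hMI b' T (le_trans ha' h2) h3 le_rfl)
    have n1 := hMnn 0 a' ha'
    have n2 := hMnn b' T h3
    rw [hIdef]
    linarith
  have hgrowth' : ∀ a' b' : ℝ, 0 ≤ a' → b' ≤ T →
      ∀ᵐ t ∂(volume.restrict (Set.Ioc a' b')), ∀ x, ‖v t x‖ ≤ M t * (1 + ‖x‖) := by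
    intro a' b' ha hb
    have hsub : Set.Ioc a' b' ⊆ Set.Icc 0 T :=
      fun t ht => ⟨(ha.trans_lt ht.1).le, ht.2.trans hb⟩
    exact ae_restrict_of_ae_restrict_of_subset hsub hgrowth
  have hlip' : ∀ a' b' : ℝ, 0 ≤ a' → b' ≤ T →
      ∀ᵐ t ∂(volume.restrict (Set.Ioc a' b')), LipschitzWith (Real.toNNReal (M t)) (v t) := by
    intro a' b' ha hb
    have hsub : Set.Ioc a' b' ⊆ Set.Icc 0 T :=
      fun t ht => ⟨(ha.trans_lt ht.1).le, ht.2.trans hb⟩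
    exact ae_restrict_of_ae_restrict_of_subset hsub hlip
  have hvx : ∀ z : EuclideanSpace ℝ (Fin d), IntervalIntegrable (fun s => v s z) volume τ b := by
    intro z
    rw [intervalIntegrable_iff, Set.uIoc_of_le hτb]
    refine Integrable.mono'
      ((hMint.mono_set (fun t ht => ⟨(hτ.trans_lt ht.1).le, ht.2.trans hbT⟩)).mul_const
        (1 + ‖z‖)) ((hmeas z).aestronglyMeasurable.restrict) ?_
    filter_upwards [hgrowth' τ b hτ hbT] with t hg
    exact hg z
  -- the key pointwise estimate
  have key : ∀ x : EuclideanSpace ℝ (Fin d),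
      dist (Φ τ b x) (x + ∫ s in τ..b, v s x) ≤ K * (1 + ‖x‖) * J ^ 2 := by
    intro x
    have hfab : ∀ a', a' ∈ Set.Icc (0:ℝ) T → ∀ b', b' ∈ Set.Icc (0:ℝ) T →
        IntervalIntegrable (fun s => v s (Φ τ s x)) volume a' b' := fun a' ha' b' hb' =>
      (hΦint τ hτmem a' ha' x).symm.trans (hΦint τ hτmem b' hb' x)
    have hf0T : IntervalIntegrable (fun s => v s (Φ τ s x)) volume 0 T :=
      hfab 0 ⟨le_rfl, hT⟩ T ⟨hT, le_rfl⟩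
    have hFτ : Φ τ τ x = x := by
      have h1 := hΦ τ hτmem τ hτmem x
      simpa using h1
    have contF : ContinuousOn (fun s => Φ τ s x) (Set.Icc 0 T) := by
      have hc : ContinuousOn (fun s => x + ∫ t in τ..s, v t (Φ τ t x)) (Set.Icc 0 T) := by
        have h1 := continuousOn_primitive_interval' (a := τ) (b₁ := (0:ℝ)) (b₂ := T) hf0T
          (by rw [Set.uIcc_of_le hT]; exact hτmem)
        rw [Set.uIcc_of_le hT] at h1
        exact continuousOn_const.add h1
      exact hc.congr fun s hs => hΦ τ hτmem s hs x
    -- bootstrap on an interval with small mass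
    have boot : ∀ σ s : ℝ, τ ≤ σ → σ ≤ s → s ≤ T →
        (∫ t in σ..s, M t) ≤ 1 / 2 →
        ∀ r ∈ Set.Icc σ s, 1 + ‖Φ τ r x‖ ≤ 2 * (1 + ‖Φ τ σ x‖) := by
      intro σ s hτσ hσs hsT hhalf
      have hσ0 : 0 ≤ σ := le_trans hτ hτσ
      have hσmem : σ ∈ Set.Icc (0:ℝ) T := ⟨hσ0, hσs.trans hsT⟩
      have hsub : Set.Icc σ s ⊆ Set.Icc (0:ℝ) T :=
        fun t ht => ⟨le_trans hσ0 ht.1, ht.2.trans hsT⟩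
      have hcont : ContinuousOn (fun r => 1 + ‖Φ τ r x‖) (Set.Icc σ s) :=
        continuousOn_const.add (contF.mono hsub).norm
      obtain ⟨r₀, hr₀mem, hr₀max⟩ :=
        isCompact_Icc.exists_isMaxOn (Set.nonempty_Icc.mpr hσs) hcont
      have hBnn : (0:ℝ) ≤ 1 + ‖Φ τ r₀ x‖ := by positivity
      have hr₀mem' : r₀ ∈ Set.Icc (0:ℝ) T := hsub hr₀mem
      have hσr₀ : σ ≤ r₀ := hr₀mem.1
      have hFd : Φ τ r₀ x - Φ τ σ x = ∫ t in σ..r₀, v t (Φ τ t x) := by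
        rw [hΦ τ hτmem r₀ hr₀mem' x, hΦ τ hτmem σ hσmem x, add_sub_add_left_eq_sub]
        exact integral_interval_sub_left (hfab τ hτmem r₀ hr₀mem') (hfab τ hτmem σ hσmem)
      have hnorm : ‖Φ τ r₀ x - Φ τ σ x‖ ≤ |∫ t in σ..r₀, M t * (1 + ‖Φ τ r₀ x‖)| := by
        rw [hFd]
        refine intervalIntegral.norm_integral_le_abs_of_norm_le ?_
          ((hMI σ r₀ hσ0 hσr₀ hr₀mem'.2).mul_const _)
        rw [Set.uIoc_of_le hσr₀]
        filter_upwards [hgrowth' σ r₀ hσ0 hr₀mem'.2, ae_restrict_mem measurableSet_Ioc]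
          with t hg ht
        have ht' : t ∈ Set.Icc σ s := ⟨ht.1.le, ht.2.trans hr₀mem.2⟩
        calc ‖v t (Φ τ t x)‖ ≤ M t * (1 + ‖Φ τ t x‖) := hg (Φ τ t x)
          _ ≤ M t * (1 + ‖Φ τ r₀ x‖) := mul_le_mul_of_nonneg_left (hr₀max ht') (hM0 t)
      have hMval : |∫ t in σ..r₀, M t * (1 + ‖Φ τ r₀ x‖)|
          = (∫ t in σ..r₀, M t) * (1 + ‖Φ τ r₀ x‖) := by
        rw [intervalIntegral.integral_mul_const,
          abs_of_nonneg (mul_nonneg (hMnn σ r₀ hσr₀) hBnn)]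
      have hMr₀s : (∫ t in σ..r₀, M t) ≤ ∫ t in σ..s, M t := by
        have e1 := integral_add_adjacent_intervals (hMI σ r₀ hσ0 hσr₀ hr₀mem'.2)
          (hMI r₀ s (le_trans hσ0 hσr₀) hr₀mem.2 hsT)
        have n1 := hMnn r₀ s hr₀mem.2
        linarith
      have hBineq : 1 + ‖Φ τ r₀ x‖ ≤ 2 * (1 + ‖Φ τ σ x‖) := by
        have tri := norm_sub_norm_le (Φ τ r₀ x) (Φ τ σ x)
        have h5 : ‖Φ τ r₀ x - Φ τ σ x‖ ≤ (1/2) * (1 + ‖Φ τ r₀ x‖) := by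
          calc ‖Φ τ r₀ x - Φ τ σ x‖
              ≤ |∫ t in σ..r₀, M t * (1 + ‖Φ τ r₀ x‖)| := hnorm
            _ = (∫ t in σ..r₀, M t) * (1 + ‖Φ τ r₀ x‖) := hMval
            _ ≤ (1/2) * (1 + ‖Φ τ r₀ x‖) :=
              mul_le_mul_of_nonneg_right (le_trans hMr₀s hhalf) hBnn
        linarith
      intro r hr
      have h1 : 1 + ‖Φ τ r x‖ ≤ 1 + ‖Φ τ r₀ x‖ := hr₀max hr
      linarith
    -- Gronwall-type bound by induction
    have main : ∀ i : ℕ, ∀ s : ℝ, τ ≤ s → s ≤ T →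
        (∫ t in τ..s, M t) ≤ ((i : ℝ) + 1) / 2 →
        1 + ‖Φ τ s x‖ ≤ 2 ^ (i + 1) * (1 + ‖x‖) := by
      intro i
      induction i with
      | zero =>
        intro s hτs hsT hbound
        have h1 := boot τ s le_rfl hτs hsT (by simpa using hbound) s ⟨hτs, le_rfl⟩
        rw [hFτ] at h1
        calc 1 + ‖Φ τ s x‖ ≤ 2 * (1 + ‖x‖) := h1
          _ = 2 ^ (0 + 1) * (1 + ‖x‖) := by ring
      | succ i ih =>
        intro s hτs hsT hbound
        have hAsnn : 0 ≤ ∫ t in τ..s, M t := hMnn τ s hτs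
        have hy0 : (0:ℝ) ≤ min (∫ t in τ..s, M t) (((i:ℝ) + 1) / 2) :=
          le_min hAsnn (by positivity)
        have contA : ContinuousOn (fun r => ∫ t in τ..r, M t) (Set.Icc τ s) := by
          have h1 := continuousOn_primitive_interval' (a := τ) (b₁ := τ) (b₂ := s)
            (hMI τ s hτ hτs hsT) (by rw [Set.uIcc_of_le hτs]; exact ⟨le_rfl, hτs⟩)
          rwa [Set.uIcc_of_le hτs] at h1
        obtain ⟨σ, hσmem, hσval⟩ : ∃ σ ∈ Set.Icc τ s,
            (∫ t in τ..σ, M t) = min (∫ t in τ..s, M t) (((i:ℝ) + 1) / 2) := by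
          have h2 := intermediate_value_Icc hτs contA
          have hmem : min (∫ t in τ..s, M t) (((i:ℝ) + 1) / 2)
              ∈ Set.Icc (∫ t in τ..τ, M t) (∫ t in τ..s, M t) := by
            simp only [intervalIntegral.integral_same]
            exact ⟨hy0, min_le_left _ _⟩
          obtain ⟨σ, hσ, hval⟩ := h2 hmem
          exact ⟨σ, hσ, hval⟩
        have hσT : σ ≤ T := hσmem.2.trans hsT
        have ihσ : 1 + ‖Φ τ σ x‖ ≤ 2 ^ (i + 1) * (1 + ‖x‖) :=
          ih σ hσmem.1 hσT (by rw [hσval]; exact min_le_right _ _)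
        have hrem : (∫ t in σ..s, M t) ≤ 1 / 2 := by
          have hdiff := integral_interval_sub_left (hMI τ s hτ hτs hsT)
            (hMI τ σ hτ hσmem.1 hσT)
          rw [hσval] at hdiff
          rcases le_total (∫ t in τ..s, M t) (((i:ℝ) + 1) / 2) with hc | hc
          · rw [min_eq_left hc] at hdiff
            linarith
          · rw [min_eq_right hc] at hdiff
            push_cast at hbound
            linarith
        have h3 := boot σ s hσmem.1 hσmem.2 hsT hrem s ⟨hσmem.2, le_rfl⟩
        calc 1 + ‖Φ τ s x‖ ≤ 2 * (1 + ‖Φ τ σ x‖) := h3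
          _ ≤ 2 * (2 ^ (i + 1) * (1 + ‖x‖)) := by linarith
          _ = 2 ^ (i + 1 + 1) * (1 + ‖x‖) := by ring
    have boundF : ∀ s : ℝ, τ ≤ s → s ≤ T → 1 + ‖Φ τ s x‖ ≤ K * (1 + ‖x‖) := by
      intro s hτs hsT
      exact main N s hτs hsT (le_trans (hMsub τ s le_rfl hτs hsT) hIN)
    have hx1 : (0:ℝ) ≤ 1 + ‖x‖ := by positivity
    have hCnn : (0:ℝ) ≤ K * (1 + ‖x‖) := by positivity
    have hFdist : ∀ s : ℝ, τ ≤ s → s ≤ b → ‖Φ τ s x - x‖ ≤ J * (K * (1 + ‖x‖)) := by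
      intro s hτs hsb
      have hsT' : s ≤ T := hsb.trans hbT
      have hsmem : s ∈ Set.Icc (0:ℝ) T := ⟨le_trans hτ hτs, hsT'⟩
      have hFe : Φ τ s x - x = ∫ t in τ..s, v t (Φ τ t x) := by
        rw [hΦ τ hτmem s hsmem x, add_sub_cancel_left]
      have h1 : ‖Φ τ s x - x‖ ≤ |∫ t in τ..s, M t * (K * (1 + ‖x‖))| := by
        rw [hFe]
        refine intervalIntegral.norm_integral_le_abs_of_norm_le ?_
          ((hMI τ s hτ hτs hsT').mul_const _)
        rw [Set.uIoc_of_le hτs]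
        filter_upwards [hgrowth' τ s hτ hsT', ae_restrict_mem measurableSet_Ioc] with t hg ht
        calc ‖v t (Φ τ t x)‖ ≤ M t * (1 + ‖Φ τ t x‖) := hg (Φ τ t x)
          _ ≤ M t * (K * (1 + ‖x‖)) :=
            mul_le_mul_of_nonneg_left (boundF t ht.1.le (ht.2.trans hsT')) (hM0 t)
      have h2 : |∫ t in τ..s, M t * (K * (1 + ‖x‖))|
          = (∫ t in τ..s, M t) * (K * (1 + ‖x‖)) := by
        rw [intervalIntegral.integral_mul_const,
          abs_of_nonneg (mul_nonneg (hMnn τ s hτs) hCnn)]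
      have h3 : (∫ t in τ..s, M t) ≤ J := by
        have e1 := integral_add_adjacent_intervals (hMI τ s hτ hτs hsT')
          (hMI s b (le_trans hτ hτs) hsb hbT)
        have n1 := hMnn s b hsb
        rw [hJdef]
        linarith
      calc ‖Φ τ s x - x‖ ≤ (∫ t in τ..s, M t) * (K * (1 + ‖x‖)) := h1.trans_eq h2
        _ ≤ J * (K * (1 + ‖x‖)) := mul_le_mul_of_nonneg_right h3 hCnn
    have heq : Φ τ b x - (x + ∫ s in τ..b, v s x)
        = ∫ s in τ..b, (v s (Φ τ s x) - v s x) := by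
      rw [intervalIntegral.integral_sub (hfab τ hτmem b hbmem) (hvx x),
        hΦ τ hτmem b hbmem x]
      abel
    rw [dist_eq_norm, heq]
    have hb1 : ‖∫ s in τ..b, (v s (Φ τ s x) - v s x)‖
        ≤ |∫ s in τ..b, M s * (J * (K * (1 + ‖x‖)))| := by
      refine intervalIntegral.norm_integral_le_abs_of_norm_le ?_
        ((hMI τ b hτ hτb hbT).mul_const _)
      rw [Set.uIoc_of_le hτb]
      filter_upwards [hlip' τ b hτ hbT, ae_restrict_mem measurableSet_Ioc] with t hl ht
      have hlip2 : ‖v t (Φ τ t x) - v t x‖ ≤ M t * ‖Φ τ t x - x‖ := by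
        have h4 := hl.dist_le_mul (Φ τ t x) x
        rw [Real.coe_toNNReal _ (hM0 t), dist_eq_norm, dist_eq_norm] at h4
        exact h4
      calc ‖v t (Φ τ t x) - v t x‖ ≤ M t * ‖Φ τ t x - x‖ := hlip2
        _ ≤ M t * (J * (K * (1 + ‖x‖))) :=
          mul_le_mul_of_nonneg_left (hFdist t ht.1.le ht.2) (hM0 t)
    have hb2 : |∫ s in τ..b, M s * (J * (K * (1 + ‖x‖)))| = J * (J * (K * (1 + ‖x‖))) := by
      rw [intervalIntegral.integral_mul_const, ← hJdef,
        abs_of_nonneg (mul_nonneg hJnn (by positivity))]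
    calc ‖∫ s in τ..b, (v s (Φ τ s x) - v s x)‖
        ≤ |∫ s in τ..b, M s * (J * (K * (1 + ‖x‖)))| := hb1
      _ = J * (J * (K * (1 + ‖x‖))) := hb2
      _ = K * (1 + ‖x‖) * J ^ 2 := by ring
  -- continuity/measurability of the second map
  have hlip3 : LipschitzWith (Real.toNNReal J)
      (fun z : EuclideanSpace ℝ (Fin d) => ∫ s in τ..b, v s z) := by
    refine LipschitzWith.of_dist_le_mul fun z w => ?_
    rw [Real.coe_toNNReal _ hJnn, dist_eq_norm, dist_eq_norm,
      ← intervalIntegral.integral_sub (hvx z) (hvx w)]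
    have h1 : ‖∫ s in τ..b, (v s z - v s w)‖ ≤ |∫ s in τ..b, M s * ‖z - w‖| := by
      refine intervalIntegral.norm_integral_le_abs_of_norm_le ?_
        ((hMI τ b hτ hτb hbT).mul_const _)
      rw [Set.uIoc_of_le hτb]
      filter_upwards [hlip' τ b hτ hbT] with t hl
      have h2 := hl.dist_le_mul z w
      rw [Real.coe_toNNReal _ (hM0 t), dist_eq_norm, dist_eq_norm] at h2
      exact h2
    calc ‖∫ s in τ..b, (v s z - v s w)‖ ≤ |∫ s in τ..b, M s * ‖z - w‖| := h1
      _ = J * ‖z - w‖ := by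
        rw [intervalIntegral.integral_mul_const, ← hJdef,
          abs_of_nonneg (mul_nonneg hJnn (norm_nonneg _))]
  have hξmeas : Measurable (fun z : EuclideanSpace ℝ (Fin d) => z + ∫ s in τ..b, v s z) :=
    (continuous_id.add hlip3.continuous).measurable
  have hW := W1_le_integral μτ (Φ τ b) _ (hΦmeas τ b) hξmeas
  refine le_trans hW ?_
  have hint2 : Integrable (fun z : EuclideanSpace ℝ (Fin d) => K * (1 + ‖z‖) * J ^ 2) μτ := by
    have : (fun z : EuclideanSpace ℝ (Fin d) => K * (1 + ‖z‖) * J ^ 2)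
        = fun z => (K * J ^ 2) * (1 + ‖z‖) := by funext z; ring
    rw [this]
    exact (((integrable_const (1:ℝ)).add hmom).const_mul _)
  have hmono := integral_mono_of_nonneg
    (Filter.Eventually.of_forall fun z => dist_nonneg) hint2
    (Filter.Eventually.of_forall key)
  refine le_trans hmono ?_
  have hval : ∫ z, K * (1 + ‖z‖) * J ^ 2 ∂μτ = K * (1 + m) * J ^ 2 := by
    have h6 : (fun z : EuclideanSpace ℝ (Fin d) => K * (1 + ‖z‖) * J ^ 2)
        = fun z => (K * J ^ 2) * (1 + ‖z‖) := by funext z; ring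
    rw [h6, MeasureTheory.integral_const_mul, integral_add (integrable_const 1) hmom]
    simp only [MeasureTheory.integral_const, measure_univ, probReal_univ, ENNReal.toReal_one, smul_eq_mul,
      mul_one, ← hmdef]
    ring
  rw [hval]
end

section
/- Let ξ, ζ : ℝ^d → ℝ^d be Borel maps and x̄ ∈ ℝ^d with ξ(x̄) ≠ ζ(x̄). Set μ = ν = δ_{x̄}. Then for every Borel selection s of the 1-duality map j₁ with |s(0)| < 1, liminf_{h→0⁺} (1/h)( W₁((Id + hξ)♯μ, (Id + hζ)♯ν) − W₁(μ,ν) − h ⟨ξ(x̄) − ζ(x̄), s(0)⟩ ) = |ξ(x̄) − ζ(x̄)| − ⟨ξ(x̄) − ζ(x̄), s(0)⟩ > 0. -/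
/-!
The only coupling of `δ_a` and `δ_b` is `δ_(a,b)`, so `W₁(δ_a, δ_b) = ‖a - b‖`. Hence for `h > 0`
the difference quotient is the constant `‖v‖ - ⟪v, s 0⟫` with `v = ξ xb - ζ xb`, which is
positive by Cauchy–Schwarz because `‖s 0‖ < 1`.
-/

open MeasureTheory Filter
open scoped RealInnerProductSpace Topology

lemma ae_eq_of_map_fst_of_map_snd_eq_dirac {E : Type*} [MeasurableSpace E]
    [MeasurableSingletonClass E] {γ : Measure (E × E)} {a b : E}
    (h₁ : γ.map Prod.fst = Measure.dirac a) (h₂ : γ.map Prod.snd = Measure.dirac b) :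
    ∀ᵐ p ∂γ, p = (a, b) := by
  have hfst : ∀ᵐ p ∂γ, p.1 = a :=
    ae_of_ae_map (p := (· = a)) measurable_fst.aemeasurable (by rw [h₁, ae_dirac_eq]; exact rfl)
  have hsnd : ∀ᵐ p ∂γ, p.2 = b :=
    ae_of_ae_map (p := (· = b)) measurable_snd.aemeasurable (by rw [h₂, ae_dirac_eq]; exact rfl)
  filter_upwards [hfst, hsnd] with p h₁ h₂ using Prod.ext h₁ h₂

lemma W1_dirac {E : Type*} [MeasurableSpace E] [MeasurableSingletonClass E] [MetricSpace E]
    (a b : E) : W1 (Measure.dirac a) (Measure.dirac b) = dist a b := by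
  suffices h : { r | ∃ γ : Measure (E × E), IsProbabilityMeasure γ ∧
      γ.map Prod.fst = Measure.dirac a ∧ γ.map Prod.snd = Measure.dirac b ∧
      r = ∫ p, dist p.1 p.2 ∂γ } = {dist a b} by
    rw [W1, h, csInf_singleton]
  ext r
  constructor
  · rintro ⟨γ, _, h₁, h₂, rfl⟩
    rw [integral_congr_ae ((ae_eq_of_map_fst_of_map_snd_eq_dirac h₁ h₂).mono
      fun p hp => congrArg (fun q : E × E => dist q.1 q.2) hp)]
    simp
  · rintro rfl
    exact ⟨Measure.dirac (a, b), inferInstance, Measure.map_dirac' measurable_fst _,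
      Measure.map_dirac' measurable_snd _, by rw [integral_dirac]⟩

lemma W1_map_dirac_add_smul {E : Type*} [NormedAddCommGroup E] [NormedSpace ℝ E]
    [MeasurableSpace E] [MeasurableSingletonClass E] (f g : E → E) (x : E) (h : ℝ) :
    W1 ((Measure.dirac x).map (fun y => y + h • f y))
        ((Measure.dirac x).map (fun y => y + h • g y)) = |h| * ‖f x - g x‖ := by
  rw [Measure.map_dirac, Measure.map_dirac, W1_dirac, dist_eq_norm, add_sub_add_left_eq_sub,
    ← smul_sub, norm_smul, Real.norm_eq_abs]

lemma sub_inner_pos_of_norm_lt_one {E : Type*} [NormedAddCommGroup E] [InnerProductSpace ℝ E]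
    {v w : E} (hv : v ≠ 0) (hw : ‖w‖ < 1) : 0 < ‖v‖ - ⟪v, w⟫ := by
  have hvpos : 0 < ‖v‖ := norm_pos_iff.mpr hv
  rw [sub_pos]
  calc ⟪v, w⟫ ≤ ‖v‖ * ‖w‖ := real_inner_le_norm v w
    _ < ‖v‖ * 1 := by gcongr
    _ = ‖v‖ := mul_one _

theorem stmt8_general {d : ℕ} (ξ ζ : EuclideanSpace ℝ (Fin d) → EuclideanSpace ℝ (Fin d))
    (xb : EuclideanSpace ℝ (Fin d)) (hne : ξ xb ≠ ζ xb)
    (s : EuclideanSpace ℝ (Fin d) → EuclideanSpace ℝ (Fin d))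
    (hs0 : ‖s 0‖ < 1) :
    (Filter.liminf
        (fun h : ℝ =>
          (1 / h) *
            (W1 ((Measure.dirac xb).map (fun x => x + h • ξ x))
                ((Measure.dirac xb).map (fun x => x + h • ζ x)) -
              W1 (Measure.dirac xb) (Measure.dirac xb) -
              h * ⟪ξ xb - ζ xb, s 0⟫))
        (𝓝[>] (0 : ℝ))) =
      ‖ξ xb - ζ xb‖ - ⟪ξ xb - ζ xb, s 0⟫ ∧
    0 < ‖ξ xb - ζ xb‖ - ⟪ξ xb - ζ xb, s 0⟫ := by
  refine ⟨?_, sub_inner_pos_of_norm_lt_one (sub_ne_zero.mpr hne) hs0⟩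
  have hquot : ∀ᶠ h in 𝓝[>] (0 : ℝ),
      (1 / h) * (W1 ((Measure.dirac xb).map (fun x => x + h • ξ x))
                ((Measure.dirac xb).map (fun x => x + h • ζ x)) -
              W1 (Measure.dirac xb) (Measure.dirac xb) - h * ⟪ξ xb - ζ xb, s 0⟫) =
        ‖ξ xb - ζ xb‖ - ⟪ξ xb - ζ xb, s 0⟫ := by
    filter_upwards [self_mem_nhdsWithin] with h (hh : 0 < h)
    rw [W1_map_dirac_add_smul, W1_dirac, dist_self, abs_of_pos hh]
    field_simp
    ring
  rw [liminf_congr hquot, liminf_const]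

/-- Lack of superdifferentiability of the 1-Wasserstein distance at Dirac masses:
with `μ = ν = δ_{xb}` and `ξ(xb) ≠ ζ(xb)`, for any Borel selection `s` of the 1-duality
map `j₁` with `‖s(0)‖ < 1`, the liminf as `h → 0⁺` of
`(1/h)(W₁((Id + hξ)♯μ, (Id + hζ)♯ν) − W₁(μ,ν) − h⟪ξ(xb) − ζ(xb), s(0)⟫)` equals
`‖ξ(xb) − ζ(xb)‖ − ⟪ξ(xb) − ζ(xb), s(0)⟫ > 0`. -/
theorem stmt8 {d : ℕ} (ξ ζ : EuclideanSpace ℝ (Fin d) → EuclideanSpace ℝ (Fin d))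
    (hξ : Measurable ξ) (hζ : Measurable ζ)
    (xb : EuclideanSpace ℝ (Fin d)) (hne : ξ xb ≠ ζ xb)
    (s : EuclideanSpace ℝ (Fin d) → EuclideanSpace ℝ (Fin d)) (hs : Measurable s)
    (hsel₁ : ∀ z, z ≠ 0 → s z = ‖z‖⁻¹ • z)
    (hsel₂ : ‖s 0‖ ≤ 1) (hs0 : ‖s 0‖ < 1) :
    (Filter.liminf
        (fun h : ℝ =>
          (1 / h) *
            (W1 ((Measure.dirac xb).map (fun x => x + h • ξ x))
                ((Measure.dirac xb).map (fun x => x + h • ζ x)) -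
              W1 (Measure.dirac xb) (Measure.dirac xb) -
              h * ⟪ξ xb - ζ xb, s 0⟫))
        (𝓝[>] (0 : ℝ))) =
      ‖ξ xb - ζ xb‖ - ⟪ξ xb - ζ xb, s 0⟫ ∧
    0 < ‖ξ xb - ζ xb‖ - ⟪ξ xb - ζ xb, s 0⟫ :=
  stmt8_general ξ ζ xb hne s hs0
end

section
/- Let (Y, d) be a metric space, I ⊆ ℝ a compact interval, K : I ⇉ Y a set-valued map with nonempty compact images that is Hausdorff absolutely continuous, and Q : I ⇉ Y an absolutely continuous set-valued map with nonempty closed images. Then the function g(t) := inf{ d(y₁, y₂) : y₁ ∈ K(t), y₂ ∈ Q(t) } is absolutely continuous on I. -/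
open MeasureTheory intervalIntegral

/-- Absolute continuity of a real-valued function on a set: for every `ε > 0` there is
`δ > 0` such that for any finite family of non-overlapping subintervals of total length
less than `δ`, the total variation of `g` over them is less than `ε`. -/
def AbsContOn (g : ℝ → ℝ) (s : Set ℝ) : Prop :=
  ∀ ε > 0, ∃ δ > 0, ∀ n : ℕ, ∀ a b : Fin n → ℝ,
    (∀ i, a i ∈ s ∧ b i ∈ s ∧ a i ≤ b i) →
    (Pairwise fun i j => Set.Ioo (a i) (b i) ∩ Set.Ioo (a j) (b j) = ∅) →
    (∑ i, (b i - a i)) < δ → (∑ i, |g (b i) - g (a i)|) < ε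

/-- The one-sided localized Hausdorff semidistance
`Δ_{y₀,r}(A,B) = sup { d(y, B) : y ∈ A ∩ B̄(y₀,r) }` (equal to `0` if the
intersection is empty, by the junk value of the supremum). -/
noncomputable def locSemiDist {Y : Type*} [MetricSpace Y]
    (y₀ : Y) (r : ℝ) (A B : Set Y) : ℝ :=
  ⨆ y : (A ∩ Metric.closedBall y₀ r : Set Y), Metric.infDist (y : Y) B

/-- If `K : I ⇉ Y` has nonempty compact images and is Hausdorff absolutely continuous,
and `Q : I ⇉ Y` is absolutely continuous with nonempty closed images, then
`g(t) := inf { d(y₁,y₂) : y₁ ∈ K(t), y₂ ∈ Q(t) }` is absolutely continuous on `I`. -/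
theorem stmt10 {Y : Type*} [MetricSpace Y] (a b : ℝ) (hab : a ≤ b)
    (K Q : ℝ → Set Y)
    (hKne : ∀ t ∈ Set.Icc a b, (K t).Nonempty)
    (hKcpt : ∀ t ∈ Set.Icc a b, IsCompact (K t))
    (hQne : ∀ t ∈ Set.Icc a b, (Q t).Nonempty)
    (hQcl : ∀ t ∈ Set.Icc a b, IsClosed (Q t))
    -- K is Hausdorff absolutely continuous
    (hK : ∃ m : ℝ → ℝ, (∀ t, 0 ≤ m t) ∧ IntegrableOn m (Set.Icc a b) ∧
      ∀ s ∈ Set.Icc a b, ∀ t ∈ Set.Icc a b, s ≤ t →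
        Metric.hausdorffDist (K s) (K t) ≤ ∫ θ in s..t, m θ)
    -- Q is (two-sidedly) absolutely continuous
    (hQ : ∀ (y₀ : Y) (r : ℝ), 0 < r → ∃ m : ℝ → ℝ, (∀ t, 0 ≤ m t) ∧
      IntegrableOn m (Set.Icc a b) ∧
      ∀ s ∈ Set.Icc a b, ∀ t ∈ Set.Icc a b, s ≤ t →
        locSemiDist y₀ r (Q s) (Q t) ≤ (∫ θ in s..t, m θ) ∧
        locSemiDist y₀ r (Q t) (Q s) ≤ ∫ θ in s..t, m θ) :
    AbsContOn (fun t => ⨅ p : (K t) × (Q t), dist (p.1 : Y) (p.2 : Y))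
      (Set.Icc a b) := by
  classical
  set g : ℝ → ℝ := fun t => ⨅ p : (K t) × (Q t), dist (p.1 : Y) (p.2 : Y) with hgdef
  have ha : a ∈ Set.Icc a b := ⟨le_rfl, hab⟩
  obtain ⟨y₀, hy₀⟩ := hKne a ha
  obtain ⟨m, hm0, hmI, hmK⟩ := hK
  -- basic facts about g
  have hbdd : ∀ t, BddBelow (Set.range fun p : (K t) × (Q t) => dist (p.1 : Y) (p.2 : Y)) := by
    intro t
    exact ⟨0, by rintro x ⟨p, rfl⟩; exact dist_nonneg⟩
  have hgle : ∀ t, ∀ k ∈ K t, ∀ q ∈ Q t, g t ≤ dist k q := by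
    intro t k hk q hq
    exact ciInf_le (hbdd t) (⟨⟨k, hk⟩, ⟨q, hq⟩⟩ : (K t) × (Q t))
  have hglt : ∀ t ∈ Set.Icc a b, ∀ ε : ℝ, 0 < ε →
      ∃ k ∈ K t, ∃ q ∈ Q t, dist k q < g t + ε := by
    intro t ht ε hε
    obtain ⟨k, hk⟩ := hKne t ht
    obtain ⟨q, hq⟩ := hQne t ht
    haveI : Nonempty ((K t) × (Q t)) := ⟨⟨⟨k, hk⟩, ⟨q, hq⟩⟩⟩
    obtain ⟨⟨k', q'⟩, hp⟩ := exists_lt_of_ciInf_lt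
      (show (⨅ p : (K t) × (Q t), dist (p.1 : Y) (p.2 : Y)) < g t + ε from
        lt_add_of_pos_right (g t) hε)
    exact ⟨k', k'.2, q', q'.2, hp⟩
  have hg0 : ∀ t ∈ Set.Icc a b, 0 ≤ g t := by
    intro t ht
    obtain ⟨k, hk⟩ := hKne t ht
    obtain ⟨q, hq⟩ := hQne t ht
    haveI : Nonempty ((K t) × (Q t)) := ⟨⟨⟨k, hk⟩, ⟨q, hq⟩⟩⟩
    exact le_ciInf fun p => dist_nonneg
  -- interval integrability
  have hmiv : IntervalIntegrable m volume a b := by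
    rw [← Set.uIcc_of_le hab] at hmI
    exact hmI.intervalIntegrable
  have hsubIv : ∀ s ∈ Set.Icc a b, ∀ t ∈ Set.Icc a b, s ≤ t →
      IntervalIntegrable m volume s t := by
    intro s hs t ht hst
    refine (hmI.mono_set ?_).intervalIntegrable
    rw [Set.uIcc_of_le hst]
    exact Set.Icc_subset_Icc hs.1 ht.2
  set M₀ : ℝ := ∫ θ in a..b, m θ with hM₀def
  have hmIv : ∀ s ∈ Set.Icc a b, ∀ t ∈ Set.Icc a b, s ≤ t → (∫ θ in s..t, m θ) ≤ M₀ := by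
    intro s hs t ht hst
    exact integral_mono_interval hs.1 hst ht.2 (Filter.Eventually.of_forall hm0) hmiv
  have hM₀0 : 0 ≤ M₀ := intervalIntegral.integral_nonneg hab fun x _ => hm0 x
  have hEdist : ∀ s ∈ Set.Icc a b, ∀ t ∈ Set.Icc a b,
      EMetric.hausdorffEdist (K s) (K t) ≠ ⊤ := by
    intro s hs t ht
    exact Metric.hausdorffEdist_ne_top_of_nonempty_of_bounded (hKne s hs) (hKne t ht)
      (hKcpt s hs).isBounded (hKcpt t ht).isBounded
  have hHaus : ∀ s ∈ Set.Icc a b, ∀ t ∈ Set.Icc a b, s ≤ t →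
      Metric.hausdorffDist (K s) (K t) ≤ ∫ θ in s..t, m θ := hmK
  have hHausM₀ : ∀ s ∈ Set.Icc a b, ∀ t ∈ Set.Icc a b,
      Metric.hausdorffDist (K s) (K t) ≤ M₀ := by
    intro s hs t ht
    rcases le_total s t with h | h
    · exact (hmK s hs t ht h).trans (hmIv s hs t ht h)
    · rw [Metric.hausdorffDist_comm]
      exact (hmK t ht s hs h).trans (hmIv t ht s hs h)
  set D : ℝ := Metric.diam (K a) with hDdef
  have hD0 : 0 ≤ D := Metric.diam_nonneg
  -- every point of K t is within D + M₀ of y₀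
  have hky : ∀ t ∈ Set.Icc a b, ∀ k ∈ K t, dist k y₀ ≤ D + M₀ := by
    intro t ht k hk
    by_contra hcon
    push_neg at hcon
    set ε := (dist k y₀ - (D + M₀)) / 2 with hεdef
    have hε : 0 < ε := by simp only [hεdef]; linarith
    have h1 : Metric.infDist k (K a) ≤ M₀ := by
      refine le_trans (Metric.infDist_le_hausdorffDist_of_mem hk (hEdist t ht a ha)) ?_
      exact hHausM₀ t ht a ha
    obtain ⟨k₀, hk₀, hdk₀⟩ := (Metric.infDist_lt_iff (hKne a ha)).1
      (lt_of_le_of_lt h1 (by linarith : M₀ < M₀ + ε))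
    have h2 : dist k₀ y₀ ≤ D :=
      Metric.dist_le_diam_of_mem (hKcpt a ha).isBounded hk₀ hy₀
    have := dist_triangle k k₀ y₀
    simp only [hεdef] at hdk₀
    linarith
  -- global bound on g
  obtain ⟨m₁, hm₁0, hm₁I, hm₁Q⟩ := hQ y₀ (D + g a + 1) (by have := hg0 a ha; linarith)
  have hm₁iv : IntervalIntegrable m₁ volume a b := by
    rw [← Set.uIcc_of_le hab] at hm₁I
    exact hm₁I.intervalIntegrable
  set M₁ : ℝ := ∫ θ in a..b, m₁ θ with hM₁def
  -- generic lemma about locSemiDist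
  have hloc : ∀ (r : ℝ) (A B : Set Y), B.Nonempty → ∀ q ∈ A, dist q y₀ ≤ r →
      Metric.infDist q B ≤ locSemiDist y₀ r A B := by
    intro r A B hB q hq hqr
    have hbddA : BddAbove (Set.range fun y : (A ∩ Metric.closedBall y₀ r : Set Y) =>
        Metric.infDist (y : Y) B) := by
      refine ⟨Metric.infDist y₀ B + r, ?_⟩
      rintro x ⟨⟨y, hy⟩, rfl⟩
      calc Metric.infDist y B ≤ Metric.infDist y₀ B + dist y y₀ :=
            Metric.infDist_le_infDist_add_dist
        _ ≤ Metric.infDist y₀ B + r := by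
            have : dist y y₀ ≤ r := hy.2
            linarith
    exact le_ciSup hbddA (⟨q, hq, Metric.mem_closedBall.2 hqr⟩ :
      (A ∩ Metric.closedBall y₀ r : Set Y))
  have hGbound : ∀ t ∈ Set.Icc a b, g t ≤ g a + M₀ + M₁ + 1 := by
    intro t ht
    obtain ⟨k, hk, q, hq, hkq⟩ := hglt a ha (1/3) (by norm_num)
    have hqball : dist q y₀ ≤ D + g a + 1 := by
      have h1 : dist k y₀ ≤ D := Metric.dist_le_diam_of_mem (hKcpt a ha).isBounded hk hy₀
      have := dist_triangle q k y₀
      rw [dist_comm q k] at this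
      linarith
    -- move q to Q t
    have hql : Metric.infDist q (Q t) ≤ M₁ := by
      refine le_trans (hloc _ _ _ (hQne t ht) q hq hqball) ?_
      refine le_trans ((hm₁Q a ha t ht ht.1).1) ?_
      exact integral_mono_interval le_rfl ht.1 ht.2 (Filter.Eventually.of_forall hm₁0) hm₁iv
    obtain ⟨q', hq', hdq'⟩ := (Metric.infDist_lt_iff (hQne t ht)).1
      (lt_of_le_of_lt hql (by norm_num : M₁ < M₁ + 1/3))
    -- move k to K t
    have hkl : Metric.infDist k (K t) ≤ M₀ :=
      le_trans (Metric.infDist_le_hausdorffDist_of_mem hk (hEdist a ha t ht)) (hHausM₀ a ha t ht)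
    obtain ⟨k', hk', hdk'⟩ := (Metric.infDist_lt_iff (hKne t ht)).1
      (lt_of_le_of_lt hkl (by norm_num : M₀ < M₀ + 1/3))
    have h1 : g t ≤ dist k' q' := hgle t k' hk' q' hq'
    have h2 := dist_triangle k' k q'
    have h3 := dist_triangle k q q'
    rw [dist_comm k' k] at h2
    linarith
  set G : ℝ := g a + M₀ + M₁ + 1 with hGdef
  have hG0 : 0 ≤ G := by
    have := hg0 a ha
    have := hGbound a ha
    simp only [hGdef]
    linarith
  set r : ℝ := D + M₀ + G + 2 with hrdef
  have hr : 0 < r := by simp only [hrdef]; linarith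
  obtain ⟨m₂, hm₂0, hm₂I, hm₂Q⟩ := hQ y₀ r hr
  have hm₂iv : ∀ s ∈ Set.Icc a b, ∀ t ∈ Set.Icc a b, s ≤ t →
      IntervalIntegrable m₂ volume s t := by
    intro s hs t ht hst
    refine (hm₂I.mono_set ?_).intervalIntegrable
    rw [Set.uIcc_of_le hst]
    exact Set.Icc_subset_Icc hs.1 ht.2
  -- the key one-sided estimate
  have hkey : ∀ u ∈ Set.Icc a b, ∀ v ∈ Set.Icc a b,
      g v ≤ g u + Metric.hausdorffDist (K u) (K v) + locSemiDist y₀ r (Q u) (Q v) := by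
    intro u hu v hv
    by_contra hcon
    push_neg at hcon
    set X := g u + Metric.hausdorffDist (K u) (K v) + locSemiDist y₀ r (Q u) (Q v) with hXdef
    set ε : ℝ := min 1 ((g v - X) / 4) with hεdef
    have hgvX : 0 < g v - X := by linarith
    have hε : 0 < ε := by
      simp only [hεdef, lt_min_iff]
      constructor <;> [norm_num; linarith]
    have hε1 : ε ≤ 1 := min_le_left _ _
    have hε4 : 4 * ε ≤ g v - X := by
      have : ε ≤ (g v - X) / 4 := min_le_right _ _
      linarith
    obtain ⟨k, hk, q, hq, hkq⟩ := hglt u hu ε hε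
    have hgub : g u ≤ G := le_trans (hGbound u hu) le_rfl
    have hqball : dist q y₀ ≤ r := by
      have h1 : dist k y₀ ≤ D + M₀ := hky u hu k hk
      have h2 := dist_triangle q k y₀
      rw [dist_comm q k] at h2
      simp only [hrdef]
      linarith
    have hql : Metric.infDist q (Q v) ≤ locSemiDist y₀ r (Q u) (Q v) :=
      hloc r (Q u) (Q v) (hQne v hv) q hq hqball
    obtain ⟨q', hq', hdq'⟩ := (Metric.infDist_lt_iff (hQne v hv)).1
      (lt_of_le_of_lt hql (lt_add_of_pos_right _ hε))
    have hkl : Metric.infDist k (K v) ≤ Metric.hausdorffDist (K u) (K v) :=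
      Metric.infDist_le_hausdorffDist_of_mem hk (hEdist u hu v hv)
    obtain ⟨k', hk', hdk'⟩ := (Metric.infDist_lt_iff (hKne v hv)).1
      (lt_of_le_of_lt hkl (lt_add_of_pos_right _ hε))
    have h1 : g v ≤ dist k' q' := hgle v k' hk' q' hq'
    have h2 := dist_triangle k' k q'
    have h3 := dist_triangle k q q'
    rw [dist_comm k' k] at h2
    simp only [hXdef] at hε4
    linarith
  -- hence a Lipschitz-like integral estimate
  set M : ℝ → ℝ := fun θ => m θ + m₂ θ with hMdef
  have hM0 : ∀ θ, 0 ≤ M θ := fun θ => add_nonneg (hm0 θ) (hm₂0 θ)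
  have hMint : IntegrableOn M (Set.Icc a b) volume := hmI.add hm₂I
  have hlip : ∀ s ∈ Set.Icc a b, ∀ t ∈ Set.Icc a b, s ≤ t →
      |g t - g s| ≤ ∫ θ in s..t, M θ := by
    intro s hs t ht hst
    have hint : (∫ θ in s..t, M θ) = (∫ θ in s..t, m θ) + ∫ θ in s..t, m₂ θ :=
      intervalIntegral.integral_add (hsubIv s hs t ht hst) (hm₂iv s hs t ht hst)
    have h1 : g t - g s ≤ ∫ θ in s..t, M θ := by
      have := hkey s hs t ht
      have hh := hmK s hs t ht hst
      have hl := (hm₂Q s hs t ht hst).1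
      rw [hint]; linarith
    have h2 : g s - g t ≤ ∫ θ in s..t, M θ := by
      have := hkey t ht s hs
      have hh : Metric.hausdorffDist (K t) (K s) ≤ ∫ θ in s..t, m θ := by
        rw [Metric.hausdorffDist_comm]; exact hmK s hs t ht hst
      have hl := (hm₂Q s hs t ht hst).2
      rw [hint]; linarith
    rw [abs_sub_le_iff]
    exact ⟨h1, h2⟩
  -- absolute continuity of the integral of M
  intro ε hε
  have hfin : (∫⁻ θ, (Set.Icc a b).indicator (fun θ => ENNReal.ofReal (M θ)) θ) ≠ ⊤ := by
    rw [lintegral_indicator measurableSet_Icc]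
    exact hMint.lintegral_lt_top.ne
  obtain ⟨δ', hδ'0, hδ'⟩ := exists_pos_setLIntegral_lt_of_measure_lt hfin
    (show ENNReal.ofReal ε ≠ 0 by simp [hε, ENNReal.ofReal_pos.2 hε])
  obtain ⟨δ, hδ0, hδlt⟩ : ∃ δ : ℝ, 0 < δ ∧ ENNReal.ofReal δ < δ' := by
    rcases eq_or_ne δ' ⊤ with h | h
    · exact ⟨1, one_pos, by simp [h]⟩
    · have h0 : 0 < δ'.toReal := ENNReal.toReal_pos hδ'0.ne' h
      refine ⟨δ'.toReal / 2, by linarith, ?_⟩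
      exact (ENNReal.ofReal_lt_iff_lt_toReal (by linarith) h).2 (by linarith)
  refine ⟨δ, hδ0, ?_⟩
  intro n p q hpq hdisj hsum
  -- per-interval estimate via lintegral
  set U : Set ℝ := ⋃ i, Set.Ioo (p i) (q i) with hUdef
  have hUsub : U ⊆ Set.Icc a b := by
    refine Set.iUnion_subset fun i => ?_
    exact (Set.Ioo_subset_Icc_self).trans (Set.Icc_subset_Icc (hpq i).1.1 (hpq i).2.1.2)
  have hUmeas : volume U < δ' := by
    have h1 : volume U ≤ ∑' i, volume (Set.Ioo (p i) (q i)) := measure_iUnion_le _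
    have h2 : (∑' i, volume (Set.Ioo (p i) (q i))) = ∑ i, ENNReal.ofReal (q i - p i) := by
      rw [tsum_fintype]
      congr 1
      ext i
      rw [Real.volume_Ioo]
    have h3 : (∑ i, ENNReal.ofReal (q i - p i)) = ENNReal.ofReal (∑ i, (q i - p i)) :=
      (ENNReal.ofReal_sum_of_nonneg fun i _ => sub_nonneg.2 (hpq i).2.2).symm
    calc volume U ≤ ENNReal.ofReal (∑ i, (q i - p i)) := by rw [← h3, ← h2]; exact h1
      _ < ENNReal.ofReal δ := (ENNReal.ofReal_lt_ofReal_iff hδ0).2 hsum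
      _ < δ' := hδlt
  have hUlt := hδ' U hUmeas
  have hUeq : (∫⁻ θ in U, (Set.Icc a b).indicator (fun θ => ENNReal.ofReal (M θ)) θ)
      = ∫⁻ θ in U, ENNReal.ofReal (M θ) := by
    refine setLIntegral_congr_fun (MeasurableSet.iUnion fun i => measurableSet_Ioo) ?_
    exact fun x hx => Set.indicator_of_mem (hUsub hx) _
  rw [hUeq] at hUlt
  -- each interval's contribution
  have hIoosub : ∀ i : Fin n, Set.Ioo (p i) (q i) ⊆ U := fun i => Set.subset_iUnion (fun i => Set.Ioo (p i) (q i)) i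
  have hLi_ne : ∀ i : Fin n, (∫⁻ θ in Set.Ioo (p i) (q i), ENNReal.ofReal (M θ)) ≠ ⊤ := by
    intro i
    exact ((lt_of_le_of_lt (lintegral_mono_set (hIoosub i)) hUlt).trans_le le_top).ne
  have hper : ∀ i : Fin n, |g (q i) - g (p i)| ≤
      (∫⁻ θ in Set.Ioo (p i) (q i), ENNReal.ofReal (M θ)).toReal := by
    intro i
    obtain ⟨hpi, hqi, hle⟩ := hpq i
    have h1 := hlip (p i) hpi (q i) hqi hle
    have hsub : Set.Ioo (p i) (q i) ⊆ Set.Icc a b :=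
      (Set.Ioo_subset_Icc_self).trans (Set.Icc_subset_Icc hpi.1 hqi.2)
    have hint : IntegrableOn M (Set.Ioo (p i) (q i)) volume := hMint.mono_set hsub
    have h2 : (∫ θ in (p i)..(q i), M θ) = ∫ θ in Set.Ioo (p i) (q i), M θ := by
      rw [intervalIntegral.integral_of_le hle, integral_Ioc_eq_integral_Ioo]
    have h3 : (∫ θ in Set.Ioo (p i) (q i), M θ) =
        (∫⁻ θ in Set.Ioo (p i) (q i), ENNReal.ofReal (M θ)).toReal := by
      rw [integral_eq_lintegral_of_nonneg_ae (Filter.Eventually.of_forall hM0)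
        hint.aestronglyMeasurable]
    rw [h2, h3] at h1
    exact h1
  have hdisj' : Pairwise (Function.onFun Disjoint fun i => Set.Ioo (p i) (q i)) := by
    intro i j hij
    exact Set.disjoint_iff_inter_eq_empty.2 (hdisj hij)
  have hsumlin : (∑ i, ∫⁻ θ in Set.Ioo (p i) (q i), ENNReal.ofReal (M θ))
      = ∫⁻ θ in U, ENNReal.ofReal (M θ) := by
    rw [hUdef, lintegral_iUnion (fun i => measurableSet_Ioo) hdisj', tsum_fintype]
  calc (∑ i, |g (q i) - g (p i)|)
      ≤ ∑ i, (∫⁻ θ in Set.Ioo (p i) (q i), ENNReal.ofReal (M θ)).toReal :=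
        Finset.sum_le_sum fun i _ => hper i
    _ = (∑ i, ∫⁻ θ in Set.Ioo (p i) (q i), ENNReal.ofReal (M θ)).toReal :=
        (ENNReal.toReal_sum fun i _ => hLi_ne i).symm
    _ = (∫⁻ θ in U, ENNReal.ofReal (M θ)).toReal := by rw [hsumlin]
    _ < ε := ENNReal.toReal_lt_of_lt_ofReal hUlt
end
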